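/- arXiv:math/0608338 — 2 statements merged into one kernel-verified Lean document; each statement's English description precedes it below -/
import Mathlib

section
/- Let A and B be self-adjoint, non-negative operators in separable Hilbert spaces H and K, respectively. Then the kernel of the closure of A⊗I + I⊗B (defined on the algebraic tensor product of the domains) equals (Ker A) ⊗ (Ker B), the closed tensor product of the kernels. -/
/-!
On `Dom A ⊗ Dom B` write `C = T₁ + T₂` with `T₁ = A ⊗ 1` and `T₂ = 1 ⊗ B`. By the Schur product
theorem, `(u, v) ↦ ⟪Tᵢ u, v⟫` is a positive semidefinite form. If `(z, 0)` is a limit of graph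
points `(uₙ, C uₙ)`, then `⟪T₁ uₙ, uₙ⟫ + ⟪T₂ uₙ, uₙ⟫ → 0`, so both terms tend to `0`, and
Cauchy–Schwarz for these forms gives `⟪z, Tᵢ v⟫ = 0` for every `v`. Hence `z` is orthogonal to
`ran A ⊗ K` and to `H ⊗ ran B`, and the orthogonal complement of these is
`(ran A)ᗮ ⊗ (ran B)ᗮ = ker A ⊗ ker B`.
-/

open scoped RealInnerProductSpace TensorProduct
open Filter Topology

namespace LinearMap.IsPosSemidef

variable {M N : Type*} [AddCommGroup M] [Module ℝ M] [AddCommGroup N] [Module ℝ N]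

theorem apply_mul_apply_le {B : LinearMap.BilinForm ℝ M} (hB : LinearMap.IsPosSemidef B)
    (x y : M) : B x y * B x y ≤ B x x * B y y := by
  have hdisc : discrim (B y y) (2 * B x y) (B x x) ≤ 0 := discrim_le_zero fun s => by
    have h := hB.isNonneg.nonneg (x + s • y)
    have hyx : B y x = B x y := hB.isSymm.eq y x
    simp only [map_add, map_smul, LinearMap.add_apply, LinearMap.smul_apply, smul_eq_mul,
      hyx] at h
    linarith
  rw [discrim] at hdisc
  linarith

theorem compl₁₂ {B : LinearMap.BilinForm ℝ M} (hB : LinearMap.IsPosSemidef B) (f : N →ₗ[ℝ] M) :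
    (B.compl₁₂ f f).IsPosSemidef where
  isSymm := ⟨fun x y => hB.isSymm.eq (f x) (f y)⟩
  isNonneg := ⟨fun x => hB.isNonneg.nonneg (f x)⟩

theorem posSemidef_gram {B : LinearMap.BilinForm ℝ M} (hB : LinearMap.IsPosSemidef B)
    {ι : Type*} [Fintype ι] (v : ι → M) : (Matrix.of fun i j => B (v i) (v j)).PosSemidef := by
  refine .of_dotProduct_mulVec_nonneg ?_ fun x => ?_
  · ext i j
    exact hB.isSymm.eq (v j) (v i)
  · refine (hB.isNonneg.nonneg (∑ i, x i • v i)).trans_eq ?_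
    simp only [map_sum, map_smul, LinearMap.coe_sum, LinearMap.coe_smul, Finset.sum_apply,
      Pi.smul_apply, smul_eq_mul, Finset.mul_sum, dotProduct, Pi.star_apply, star_trivial,
      Matrix.mulVec, Matrix.of_apply, mul_comm]
    rw [Finset.sum_comm]
    simp only [mul_left_comm]

theorem tmul {B₁ : LinearMap.BilinForm ℝ M} {B₂ : LinearMap.BilinForm ℝ N}
    (hB₁ : LinearMap.IsPosSemidef B₁) (hB₂ : LinearMap.IsPosSemidef B₂) :
    (B₁.tmul B₂).IsPosSemidef := by
  refine ⟨hB₁.isSymm.tmul hB₂.isSymm, ⟨fun u => ?_⟩⟩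
  obtain ⟨s, rfl⟩ := TensorProduct.exists_finset u
  have hschur := ((hB₁.posSemidef_gram fun i : s => i.1.1).hadamard
    (hB₂.posSemidef_gram fun i : s => i.1.2)).dotProduct_mulVec_nonneg 1
  refine hschur.trans_eq ?_
  simp only [dotProduct, Finset.univ_eq_attach, Pi.star_apply, Pi.one_apply, star_trivial,
    Matrix.mulVec, Matrix.hadamard, Matrix.of_apply, mul_comm, one_mul, map_sum,
    LinearMap.coe_sum, Finset.sum_apply, LinearMap.BilinForm.tensorDistrib_tmul, smul_eq_mul]
  rw [Finset.sum_comm, ← Finset.sum_attach s]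
  refine Finset.sum_congr rfl fun y _ => ?_
  rw [← Finset.sum_attach s]

end LinearMap.IsPosSemidef

theorem inner_eq_zero_of_mk_zero_mem_closure_range {E F : Type*} [AddCommGroup E] [Module ℝ E]
    [NormedAddCommGroup F] [InnerProductSpace ℝ F] {ι T₁ T₂ : E →ₗ[ℝ] F}
    (h₁ : ((innerₗ F).compl₁₂ T₁ ι).IsPosSemidef) (h₂ : ((innerₗ F).compl₁₂ T₂ ι).IsPosSemidef)
    {z : F} (hz : (z, 0) ∈ closure (Set.range fun u => (ι u, T₁ u + T₂ u))) (v : E) :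
    ⟪z, T₁ v⟫ = 0 := by
  obtain ⟨p, hp, hlim⟩ := mem_closure_iff_seq_limit.mp hz
  choose u hu using hp
  obtain rfl : p = fun n => (ι (u n), T₁ (u n) + T₂ (u n)) := funext fun n => (hu n).symm
  have hι : Tendsto (fun n => ι (u n)) atTop (𝓝 z) := (continuous_fst.tendsto _).comp hlim
  have hT : Tendsto (fun n => T₁ (u n) + T₂ (u n)) atTop (𝓝 0) :=
    (continuous_snd.tendsto _).comp hlim
  set α := (innerₗ F).compl₁₂ T₁ ι
  have hdiag : Tendsto (fun n => α (u n) (u n)) atTop (𝓝 0) := by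
    have hsum : Tendsto (fun n => ⟪T₁ (u n) + T₂ (u n), ι (u n)⟫) atTop (𝓝 0) := by
      simpa using hT.inner hι
    refine squeeze_zero (fun n => h₁.isNonneg.nonneg (u n)) (fun n => ?_) hsum
    have := h₂.isNonneg.nonneg (u n)
    simp only [α, LinearMap.compl₁₂_apply, innerₗ_apply_apply, inner_add_left] at this ⊢
    linarith
  have hoff : Tendsto (fun n => α (u n) v) atTop (𝓝 ⟪T₁ v, z⟫) :=
    ((tendsto_const_nhds (x := T₁ v)).inner (𝕜 := ℝ) hι).congr fun n => h₁.isSymm.eq v (u n)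
  have hsq : ⟪T₁ v, z⟫ * ⟪T₁ v, z⟫ ≤ 0 * α v v :=
    le_of_tendsto_of_tendsto' (hoff.mul hoff) (hdiag.mul_const _)
      fun n => h₁.apply_mul_apply_le (u n) v
  rw [real_inner_comm]
  nlinarith [mul_self_nonneg ⟪T₁ v, z⟫]

section HilbertTensor

variable {H K HK : Type*} [NormedAddCommGroup H] [InnerProductSpace ℝ H]
  [NormedAddCommGroup K] [InnerProductSpace ℝ K] [NormedAddCommGroup HK] [InnerProductSpace ℝ HK]
  {t : H →ₗ[ℝ] K →ₗ[ℝ] HK}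

theorem norm_apply_apply_of_inner (ht : ∀ h h' k k', ⟪t h k, t h' k'⟫ = ⟪h, h'⟫ * ⟪k, k'⟫)
    (h : H) (k : K) : ‖t h k‖ = ‖h‖ * ‖k‖ := by
  have hsq : ‖t h k‖ ^ 2 = (‖h‖ * ‖k‖) ^ 2 := by
    rw [← real_inner_self_eq_norm_sq, ht, real_inner_self_eq_norm_sq, real_inner_self_eq_norm_sq,
      mul_pow]
  exact (pow_left_inj₀ (norm_nonneg _) (by positivity) two_ne_zero).mp hsq

theorem innerₗ_compl₁₂_lift_compl₁₂ (ht : ∀ h h' k k', ⟪t h k, t h' k'⟫ = ⟪h, h'⟫ * ⟪k, k'⟫)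
    {E F : Type*} [AddCommGroup E] [Module ℝ E] [AddCommGroup F] [Module ℝ F]
    (f₁ f₂ : E →ₗ[ℝ] H) (g₁ g₂ : F →ₗ[ℝ] K) :
    (innerₗ HK).compl₁₂ (TensorProduct.lift (t.compl₁₂ f₁ g₁))
        (TensorProduct.lift (t.compl₁₂ f₂ g₂))
      = LinearMap.BilinForm.tmul ((innerₗ H).compl₁₂ f₁ f₂) ((innerₗ K).compl₁₂ g₁ g₂) := by
  refine TensorProduct.ext' fun e f => TensorProduct.ext' fun e' f' => ?_
  simp [ht, mul_comm]

theorem eq_zero_of_forall_inner_apply_eq_zero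
    (htdense : Dense ((Submodule.span ℝ {z : HK | ∃ h k, z = t h k} : Submodule ℝ HK) : Set HK))
    {w : HK} (hw : ∀ h k, ⟪w, t h k⟫ = 0) : w = 0 := by
  refine htdense.eq_of_inner_left ℝ fun v hv => ?_
  rw [inner_zero_left]
  induction hv using Submodule.span_induction with
  | mem _ hv => obtain ⟨h, k, rfl⟩ := hv; exact hw h k
  | zero => exact inner_zero_right w
  | add a b _ _ ha hb => rw [inner_add_right, ha, hb, add_zero]
  | smul r a _ ha => rw [real_inner_smul_right, ha, mul_zero]

theorem inner_apply_eq_zero_of_mem_closure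
    (ht : ∀ h h' k k', ⟪t h k, t h' k'⟫ = ⟪h, h'⟫ * ⟪k, k'⟫) {S : Set H} {T : Set K} {z : HK}
    (hST : ∀ h ∈ S, ∀ k ∈ T, ⟪z, t h k⟫ = 0) {h : H} {k : K} (hh : h ∈ closure S)
    (hk : k ∈ closure T) : ⟪z, t h k⟫ = 0 := by
  have hleft : ∀ h, Continuous (t h) := fun h =>
    AddMonoidHomClass.continuous_of_bound (t h) ‖h‖ fun k => (norm_apply_apply_of_inner ht h k).le
  have hright : ∀ k, Continuous fun h => t h k := fun k =>
    AddMonoidHomClass.continuous_of_bound (t.flip k) ‖k‖ fun h => by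
      simp [norm_apply_apply_of_inner ht, mul_comm]
  have := map_mem_closure₂' (f := fun h k => ⟪z, t h k⟫) (u := {0})
    (fun h => continuous_const.inner (hleft h)) (fun k => continuous_const.inner (hright k))
    hh hk hST
  rwa [closure_singleton] at this

theorem mem_topologicalClosure_span_image2_of_inner_eq_zero [CompleteSpace HK]
    (ht : ∀ h h' k k', ⟪t h k, t h' k'⟫ = ⟪h, h'⟫ * ⟪k, k'⟫)
    (htdense : Dense ((Submodule.span ℝ {z : HK | ∃ h k, z = t h k} : Submodule ℝ HK) : Set HK))
    (U : Submodule ℝ H) (V : Submodule ℝ K) [U.HasOrthogonalProjection]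
    [V.HasOrthogonalProjection] {z : HK} (hU : ∀ h ∈ Uᗮ, ∀ k, ⟪z, t h k⟫ = 0)
    (hV : ∀ h, ∀ k ∈ Vᗮ, ⟪z, t h k⟫ = 0) :
    z ∈ (Submodule.span ℝ (Set.image2 (fun h k => t h k) U V)).topologicalClosure := by
  set M := (Submodule.span ℝ (Set.image2 (fun h k => t h k) U V)).topologicalClosure
  have hperp : ∀ h k, h ∈ Uᗮ ∨ k ∈ Vᗮ → t h k ∈ Mᗮ := by
    intro h k hhk
    rw [Submodule.orthogonal_closure, Submodule.mem_orthogonal']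
    intro u hu
    refine Submodule.mem_orthogonal_singleton_iff_inner_right.mp (Submodule.span_le.mpr ?_ hu)
    rintro _ ⟨x, hx, y, hy, rfl⟩
    rw [SetLike.mem_coe, Submodule.mem_orthogonal_singleton_iff_inner_right, ht]
    rcases hhk with hh | hk
    · rw [U.inner_left_of_mem_orthogonal hx hh, zero_mul]
    · rw [V.inner_left_of_mem_orthogonal hy hk, mul_zero]
  set w := z - M.starProjection z
  have hw : w ∈ Mᗮ := M.sub_starProjection_mem_orthogonal z
  have hw_inner : ∀ r ∈ Mᗮ, ⟪z, r⟫ = 0 → ⟪w, r⟫ = 0 := fun r hr hzr => by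
    rw [inner_sub_left, hzr, M.inner_right_of_mem_orthogonal (M.starProjection_apply_mem z) hr,
      sub_zero]
  suffices w = 0 by
    rw [sub_eq_zero.mp this]
    exact M.starProjection_apply_mem z
  refine eq_zero_of_forall_inner_apply_eq_zero htdense fun h k => ?_
  set P := U.starProjection
  set Q := V.starProjection
  have hsplit : t h k = t (P h) (Q k) + t (h - P h) k + t (P h) (k - Q k) := by
    simp only [map_sub, LinearMap.sub_apply]; abel
  have hPQ : t (P h) (Q k) ∈ M := Submodule.le_topologicalClosure _ <| Submodule.subset_span
    ⟨P h, U.starProjection_apply_mem h, Q k, V.starProjection_apply_mem k, rfl⟩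
  rw [hsplit, inner_add_right, inner_add_right, M.inner_left_of_mem_orthogonal hPQ hw,
    hw_inner _ (hperp _ _ (.inl (U.sub_starProjection_mem_orthogonal h)))
      (hU _ (U.sub_starProjection_mem_orthogonal h) k),
    hw_inner _ (hperp _ _ (.inr (V.sub_starProjection_mem_orthogonal k)))
      (hV _ _ (V.sub_starProjection_mem_orthogonal k))]
  norm_num

end HilbertTensor

namespace LinearPMap

theorem exists_apply_eq_zero_iff {R E F : Type*} [Ring R] [AddCommGroup E] [Module R E]
    [AddCommGroup F] [Module R F] (f : E →ₗ.[R] F) {z : E} :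
    (∃ hz : z ∈ f.domain, f ⟨z, hz⟩ = 0) ↔ (z, 0) ∈ f.graph :=
  ⟨fun ⟨hz, h⟩ => (image_iff hz).mp h.symm,
    fun h => ⟨mem_domain_of_mem_graph h, ((image_iff _).mpr h).symm⟩⟩

variable {H : Type*} [NormedAddCommGroup H] [InnerProductSpace ℝ H] {A : H →ₗ.[ℝ] H}

theorem isPosSemidef_innerₗ_compl₁₂ (hAsymm : A.IsFormalAdjoint A)
    (hAnn : ∀ x : A.domain, 0 ≤ ⟪A x, (x : H)⟫) :
    ((innerₗ H).compl₁₂ A.toFun A.domain.subtype).IsPosSemidef where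
  isSymm := ⟨fun x y => by simp [hAsymm x y, real_inner_comm]⟩
  isNonneg := ⟨hAnn⟩

theorem isFormalAdjoint_self_of_adjoint_eq [CompleteSpace H] (hA : Dense (A.domain : Set H))
    (hAsa : A.adjoint = A) : A.IsFormalAdjoint A := by
  have h := adjoint_isFormalAdjoint hA
  rwa [hAsa] at h

theorem mem_orthogonal_range_iff [CompleteSpace H] (hA : Dense (A.domain : Set H))
    (hAsa : A.adjoint = A) {x : H} :
    x ∈ (LinearMap.range A.toFun)ᗮ ↔ ∃ y : A.domain, (y : H) = x ∧ A y = 0 := by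
  constructor
  · intro hx
    have hperp : ∀ u : A.domain, ⟪(0 : H), (u : H)⟫ = ⟪x, A u⟫ := fun u => by
      rw [inner_zero_left]
      exact (Submodule.inner_left_of_mem_orthogonal (LinearMap.mem_range_self _ u) hx).symm
    have hdom : x ∈ A.adjoint.domain := mem_adjoint_domain_of_exists x ⟨0, hperp⟩
    have hgraph : (x, 0) ∈ A.adjoint.graph :=
      (image_iff hdom).mp (adjoint_apply_eq hA ⟨x, hdom⟩ hperp).symm
    rw [hAsa] at hgraph
    obtain ⟨y, hy, hAy⟩ := A.mem_graph_iff.mp hgraph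
    exact ⟨y, hy, hAy⟩
  · rintro ⟨y, rfl, hy⟩
    rw [Submodule.mem_orthogonal]
    rintro _ ⟨u, rfl⟩
    exact (isFormalAdjoint_self_of_adjoint_eq hA hAsa u y).trans (by rw [hy, inner_zero_right])

end LinearPMap

theorem LinearPMap.graph_subset_range_lift {H K HK : Type*} [AddCommGroup H] [Module ℝ H]
    [AddCommGroup K] [Module ℝ K] [AddCommGroup HK] [Module ℝ HK] {t : H →ₗ[ℝ] K →ₗ[ℝ] HK}
    {A : H →ₗ.[ℝ] H} {B : K →ₗ.[ℝ] K} {C : HK →ₗ.[ℝ] HK}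
    (hCdom : C.domain
      = Submodule.span ℝ {z : HK | ∃ (x : A.domain) (y : B.domain), z = t ↑x ↑y})
    (hCapp : ∀ (x : A.domain) (y : B.domain) (hz : t ↑x ↑y ∈ C.domain),
      C ⟨t ↑x ↑y, hz⟩ = t (A x) ↑y + t ↑x (B y)) :
    (C.graph : Set (HK × HK)) ⊆ Set.range fun u : A.domain ⊗[ℝ] B.domain =>
      (TensorProduct.lift (t.compl₁₂ A.domain.subtype B.domain.subtype) u,
        TensorProduct.lift (t.compl₁₂ A.toFun B.domain.subtype) u
          + TensorProduct.lift (t.compl₁₂ A.domain.subtype B.toFun) u) := by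
  set ι := TensorProduct.lift (t.compl₁₂ A.domain.subtype B.domain.subtype)
  set TA := TensorProduct.lift (t.compl₁₂ A.toFun B.domain.subtype)
  set TB := TensorProduct.lift (t.compl₁₂ A.domain.subtype B.toFun)
  have hmem : ∀ u, (ι u, TA u + TB u) ∈ C.graph := by
    intro u
    induction u using TensorProduct.induction_on with
    | zero => simp
    | tmul x y =>
      have hz : t x y ∈ C.domain := hCdom ▸ Submodule.subset_span ⟨x, y, rfl⟩
      simpa [ι, TA, TB, hCapp x y hz] using C.mem_graph ⟨t x y, hz⟩
    | add u v hu hv => simpa [add_add_add_comm] using C.graph.add_mem hu hv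
  have hdom : C.domain ≤ LinearMap.range ι := by
    rw [hCdom, Submodule.span_le]
    rintro _ ⟨x, y, rfl⟩
    exact ⟨x ⊗ₜ y, by simp [ι]⟩
  intro p hp
  obtain ⟨w, hw, -⟩ := C.mem_graph_iff.mp hp
  obtain ⟨u, hu⟩ := hdom w.2
  exact ⟨u, Prod.ext (hu.trans hw) (C.mem_graph_snd_inj (hmem u) hp (hu.trans hw))⟩

section TensorSum

variable {H K HK : Type*} [NormedAddCommGroup H] [InnerProductSpace ℝ H] [CompleteSpace H]
  [NormedAddCommGroup K] [InnerProductSpace ℝ K] [CompleteSpace K]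
  [NormedAddCommGroup HK] [InnerProductSpace ℝ HK]
  {t : H →ₗ[ℝ] K →ₗ[ℝ] HK} {A : H →ₗ.[ℝ] H} {B : K →ₗ.[ℝ] K} {C : HK →ₗ.[ℝ] HK}

theorem inner_apply_eq_zero_of_mk_zero_mem_closure_graph
    (ht : ∀ h h' k k', ⟪t h k, t h' k'⟫ = ⟪h, h'⟫ * ⟪k, k'⟫)
    (hAdense : Dense (A.domain : Set H)) (hBdense : Dense (B.domain : Set K))
    (hAsa : A.adjoint = A) (hBsa : B.adjoint = B)
    (hAnn : ∀ x : A.domain, 0 ≤ ⟪A x, (x : H)⟫) (hBnn : ∀ y : B.domain, 0 ≤ ⟪B y, (y : K)⟫)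
    (hCdom : C.domain
      = Submodule.span ℝ {z : HK | ∃ (x : A.domain) (y : B.domain), z = t ↑x ↑y})
    (hCapp : ∀ (x : A.domain) (y : B.domain) (hz : t ↑x ↑y ∈ C.domain),
      C ⟨t ↑x ↑y, hz⟩ = t (A x) ↑y + t ↑x (B y))
    {z : HK} (hz : (z, 0) ∈ C.graph.topologicalClosure) (x : A.domain) (y : B.domain) :
    ⟪z, t (A x) y⟫ = 0 ∧ ⟪z, t x (B y)⟫ = 0 := by
  have hαA := (A.isPosSemidef_innerₗ_compl₁₂ (A.isFormalAdjoint_self_of_adjoint_eq hAdense hAsa)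
    hAnn).tmul (isPosSemidef_inner.compl₁₂ B.domain.subtype)
  have hαB := (isPosSemidef_inner.compl₁₂ A.domain.subtype).tmul
    (B.isPosSemidef_innerₗ_compl₁₂ (B.isFormalAdjoint_self_of_adjoint_eq hBdense hBsa) hBnn)
  rw [← innerₗ_compl₁₂_lift_compl₁₂ ht] at hαA hαB
  rw [← SetLike.mem_coe, Submodule.topologicalClosure_coe] at hz
  have hz' := closure_mono (LinearPMap.graph_subset_range_lift hCdom hCapp) hz
  constructor
  · simpa using inner_eq_zero_of_mk_zero_mem_closure_range hαA hαB hz' (x ⊗ₜ y)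
  · simpa using inner_eq_zero_of_mk_zero_mem_closure_range hαB hαA
      (by simpa only [add_comm] using hz') (x ⊗ₜ y)

theorem image2_orthogonal_range_eq (hAdense : Dense (A.domain : Set H))
    (hBdense : Dense (B.domain : Set K)) (hAsa : A.adjoint = A) (hBsa : B.adjoint = B) :
    Set.image2 (fun h k => t h k) (LinearMap.range A.toFun)ᗮ (LinearMap.range B.toFun)ᗮ
      = {z : HK | ∃ (x : A.domain) (y : B.domain), A x = 0 ∧ B y = 0 ∧ z = t ↑x ↑y} := by
  ext z
  simp only [Set.mem_ofPred_eq, Set.mem_image2, SetLike.mem_coe,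
    LinearPMap.mem_orthogonal_range_iff hAdense hAsa,
    LinearPMap.mem_orthogonal_range_iff hBdense hBsa]
  constructor
  · rintro ⟨_, ⟨x, rfl, hx⟩, _, ⟨y, rfl, hy⟩, rfl⟩
    exact ⟨x, y, hx, hy, rfl⟩
  · rintro ⟨x, y, hx, hy, rfl⟩
    exact ⟨x, ⟨x, rfl, hx⟩, y, ⟨y, rfl, hy⟩, rfl⟩

end TensorSum

theorem LinearPMap.span_le_comap_inl_graph {H K HK : Type*} [AddCommGroup H] [Module ℝ H]
    [AddCommGroup K] [Module ℝ K] [AddCommGroup HK] [Module ℝ HK] {t : H →ₗ[ℝ] K →ₗ[ℝ] HK}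
    {A : H →ₗ.[ℝ] H} {B : K →ₗ.[ℝ] K} {C : HK →ₗ.[ℝ] HK}
    (hCdom : C.domain
      = Submodule.span ℝ {z : HK | ∃ (x : A.domain) (y : B.domain), z = t ↑x ↑y})
    (hCapp : ∀ (x : A.domain) (y : B.domain) (hz : t ↑x ↑y ∈ C.domain),
      C ⟨t ↑x ↑y, hz⟩ = t (A x) ↑y + t ↑x (B y)) :
    Submodule.span ℝ {z : HK | ∃ (x : A.domain) (y : B.domain), A x = 0 ∧ B y = 0 ∧ z = t ↑x ↑y}
      ≤ C.graph.comap (LinearMap.inl ℝ HK HK) := by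
  rw [Submodule.span_le]
  rintro _ ⟨x, y, hx, hy, rfl⟩
  have hxy : t x y ∈ C.domain := hCdom ▸ Submodule.subset_span ⟨x, y, rfl⟩
  simpa [hCapp x y hxy, hx, hy] using C.mem_graph ⟨t x y, hxy⟩

theorem stmt_0_general {H K HK : Type*}
    [NormedAddCommGroup H] [InnerProductSpace ℝ H] [CompleteSpace H]
    [NormedAddCommGroup K] [InnerProductSpace ℝ K] [CompleteSpace K]
    [NormedAddCommGroup HK] [InnerProductSpace ℝ HK] [CompleteSpace HK]
    (t : H →ₗ[ℝ] K →ₗ[ℝ] HK)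
    (ht : ∀ (h h' : H) (k k' : K), ⟪t h k, t h' k'⟫ = ⟪h, h'⟫ * ⟪k, k'⟫)
    (htdense : Dense ((Submodule.span ℝ {z : HK | ∃ h k, z = t h k} : Submodule ℝ HK) : Set HK))
    (A : H →ₗ.[ℝ] H) (B : K →ₗ.[ℝ] K)
    (hAdense : Dense (A.domain : Set H)) (hBdense : Dense (B.domain : Set K))
    (hAsa : A.adjoint = A) (hBsa : B.adjoint = B)
    (hAnn : ∀ x : A.domain, 0 ≤ ⟪A x, (x : H)⟫)
    (hBnn : ∀ y : B.domain, 0 ≤ ⟪B y, (y : K)⟫)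
    (C : HK →ₗ.[ℝ] HK)
    (hCdom : C.domain
      = Submodule.span ℝ {z : HK | ∃ (x : A.domain) (y : B.domain), z = t ↑x ↑y})
    (hCapp : ∀ (x : A.domain) (y : B.domain) (hz : t ↑x ↑y ∈ C.domain),
      C ⟨t ↑x ↑y, hz⟩ = t (A x) ↑y + t ↑x (B y))
    (hCc : C.IsClosable) :
    {z : HK | ∃ hz : z ∈ C.closure.domain, C.closure ⟨z, hz⟩ = 0}
      = (((Submodule.span ℝ {z : HK | ∃ (x : A.domain) (y : B.domain),
            A x = 0 ∧ B y = 0 ∧ z = t ↑x ↑y}).topologicalClosure : Submodule ℝ HK) : Set HK) := by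
  ext z
  rw [Set.mem_ofPred_eq, LinearPMap.exists_apply_eq_zero_iff, ← hCc.graph_closure_eq_closure_graph,
    SetLike.mem_coe]
  constructor
  · intro hz
    have hzero := inner_apply_eq_zero_of_mk_zero_mem_closure_graph ht hAdense hBdense hAsa hBsa
      hAnn hBnn hCdom hCapp hz
    rw [← image2_orthogonal_range_eq hAdense hBdense hAsa hBsa]
    refine mem_topologicalClosure_span_image2_of_inner_eq_zero ht htdense _ _
      (fun h hh k => ?_) (fun h k hk => ?_)
    · rw [Submodule.orthogonal_orthogonal_eq_closure, ← SetLike.mem_coe,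
        Submodule.topologicalClosure_coe] at hh
      refine inner_apply_eq_zero_of_mem_closure ht ?_ hh (hBdense.closure_eq ▸ Set.mem_univ k)
      rintro _ ⟨x, rfl⟩ y hy
      exact (hzero x ⟨y, hy⟩).1
    · rw [Submodule.orthogonal_orthogonal_eq_closure, ← SetLike.mem_coe,
        Submodule.topologicalClosure_coe] at hk
      refine inner_apply_eq_zero_of_mem_closure ht ?_ (hAdense.closure_eq ▸ Set.mem_univ h) hk
      rintro x hx _ ⟨y, rfl⟩
      exact (hzero ⟨x, hx⟩ y).2
  · refine fun hz => Submodule.topologicalClosure_minimal _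
      ((LinearPMap.span_le_comap_inl_graph hCdom hCapp).trans
        (Submodule.comap_mono C.graph.le_topologicalClosure)) ?_ hz
    rw [Submodule.comap_coe]
    exact C.graph.isClosed_topologicalClosure.preimage (continuous_id.prodMk continuous_const)

/-- Let `H`, `K` be separable real Hilbert spaces and `HK` their Hilbert tensor product,
given by a bilinear map `t` whose elementary tensors satisfy
`⟨t h k, t h' k'⟩ = ⟨h, h'⟩⟨k, k'⟩` and span a dense subspace. Let `A`, `B` be
self-adjoint nonnegative (densely defined) operators in `H`, `K` respectively, and let
`C` be the operator `A ⊗ 1 + 1 ⊗ B` defined on the algebraic tensor product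
`Dom A ⊗_alg Dom B`; `C` is closable. Then the kernel of the closure `A ⊞ B = C̄` equals
the closed tensor product `(Ker A) ⊗ (Ker B)`, i.e. the closure of the span of the
elementary tensors of kernel vectors. -/
theorem stmt_0 {H K HK : Type*}
    [NormedAddCommGroup H] [InnerProductSpace ℝ H] [CompleteSpace H]
    [TopologicalSpace.SeparableSpace H]
    [NormedAddCommGroup K] [InnerProductSpace ℝ K] [CompleteSpace K]
    [TopologicalSpace.SeparableSpace K]
    [NormedAddCommGroup HK] [InnerProductSpace ℝ HK] [CompleteSpace HK]
    (t : H →ₗ[ℝ] K →ₗ[ℝ] HK)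
    (ht : ∀ (h h' : H) (k k' : K), ⟪t h k, t h' k'⟫ = ⟪h, h'⟫ * ⟪k, k'⟫)
    (htdense : Dense ((Submodule.span ℝ {z : HK | ∃ h k, z = t h k} : Submodule ℝ HK) : Set HK))
    (A : H →ₗ.[ℝ] H) (B : K →ₗ.[ℝ] K)
    (hAdense : Dense (A.domain : Set H)) (hBdense : Dense (B.domain : Set K))
    (hAsa : A.adjoint = A) (hBsa : B.adjoint = B)
    (hAnn : ∀ x : A.domain, 0 ≤ ⟪A x, (x : H)⟫)
    (hBnn : ∀ y : B.domain, 0 ≤ ⟪B y, (y : K)⟫)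
    (C : HK →ₗ.[ℝ] HK)
    (hCdom : C.domain
      = Submodule.span ℝ {z : HK | ∃ (x : A.domain) (y : B.domain), z = t ↑x ↑y})
    (hCapp : ∀ (x : A.domain) (y : B.domain) (hz : t ↑x ↑y ∈ C.domain),
      C ⟨t ↑x ↑y, hz⟩ = t (A x) ↑y + t ↑x (B y))
    (hCc : C.IsClosable) :
    {z : HK | ∃ hz : z ∈ C.closure.domain, C.closure ⟨z, hz⟩ = 0}
      = (((Submodule.span ℝ {z : HK | ∃ (x : A.domain) (y : B.domain),
            A x = 0 ∧ B y = 0 ∧ z = t ↑x ↑y}).topologicalClosure : Submodule ℝ HK) : Set HK) :=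
  stmt_0_general t ht htdense A B hAdense hBdense hAsa hBsa hAnn hBnn C hCdom hCapp hCc
end

section
/- Fix orthonormal vectors and degrees as follows: let H_j be Hilbert spaces with degree p(j), and e^{(j)}_{k} orthonormal in H_j. For r₁,…,r_l ∈ ℕ with r₁+…+r_l = m, and strictly increasing index sequences when p(j) is odd (non-decreasing when p(j) is even), the graded symmetrization P satisfies ‖P(e^{(1)}_{k₁^{(1)}}⊗…⊗e^{(l)}_{k_{r_l}^{(l)}})‖² = (r₁!⋯r_l!/m!) ∏_{j=1}^l ‖e^{(j)}_{k₁^{(j)}} ⋄ ⋯ ⋄ e^{(j)}_{k_{r_j}^{(j)}}‖², where ⋄ is the wedge product if p(j) is odd and the symmetric product if p(j) is even. -/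
/-!
Write `x_k = v (E.symm k)` and `ε = gsign`, so that
`‖P x‖² = (m!)⁻² Σ_{σ,τ} ε(σ) ε(τ) ∏_k ⟪x_{σ k}, x_{τ k}⟫`. Substituting `σ = ρ τ`, the product
only depends on `ρ`, and it vanishes unless `ρ` maps every block to itself, since different
blocks are orthogonal. For such `ρ` the graded sign is a cocycle, `ε(ρ τ) ε(τ) = ε(ρ)`, so the
sum over `τ` contributes a factor `m!`. A block-preserving `ρ` is a family of permutations of the
blocks; as the blocks are consecutive, its inversions are the inversions inside the blocks, each
weighted by `(-1)^(p_j²)`. So the sum over `ρ` factors into the sums over the blocks, with the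
sign of the block permutation when `p_j` is odd and `1` otherwise.
-/

open scoped RealInnerProductSpace

/-- The graded sign `sign(σ; i₁,…,i_m) = ∏_{k<r, σ(k)>σ(r)} (-1)^{p(i_{σ(k)}) p(i_{σ(r)})}`. -/
def gsign {ι : Type*} (p : ι → ℕ) {m : ℕ} (i : Fin m → ι) (σ : Equiv.Perm (Fin m)) : ℤ :=
  ∏ x ∈ Finset.univ.filter (fun x : Fin m × Fin m => x.1 < x.2 ∧ σ x.2 < σ x.1),
    (-1 : ℤ) ^ (p (i (σ x.1)) * p (i (σ x.2)))

open Finset Equiv Equiv.Perm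

/-- Like `Equiv.Perm.signAux`, but an inverted pair `(a, b)` contributes `(-1) ^ (d a * d b)`;
keeping its shape lets Mathlib's bijection `signBijAux` prove the cocycle identity. -/
def gradedSignAux {n : ℕ} (d : Fin n → ℕ) (f : Perm (Fin n)) : ℤ :=
  ∏ x ∈ finPairsLT n, if f x.1 ≤ f x.2 then (-1) ^ (d x.1 * d x.2) else 1

theorem gradedSignAux_mul {n : ℕ} (d : Fin n → ℕ) (f g : Perm (Fin n)) :
    gradedSignAux d (f * g) =
      gradedSignAux (d ∘ g.symm) f * gradedSignAux (d ∘ g.symm) g⁻¹ := by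
  unfold gradedSignAux
  rw [← prod_mul_distrib]
  refine prod_nbij (signBijAux g) signBijAux_mem signBijAux_injOn signBijAux_surj ?_
  rintro ⟨a, b⟩ hab
  replace hab : b < a := mem_finPairsLT.1 hab
  dsimp only [signBijAux]
  rw [mul_apply, mul_apply]
  by_cases hg : g b < g a
  · simp [hg, hab.not_ge, mul_comm]
  · have hg' : g a < g b := (g.injective.ne hab.ne').lt_of_le (not_lt.1 hg)
    obtain hf | hf := (f.injective.ne hg'.ne).lt_or_gt <;>
      simp [hg, hab.le, hf.le, hf.not_ge, mul_comm, ← mul_pow]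

theorem gradedSignAux_mul_self {n : ℕ} (d : Fin n → ℕ) (f : Perm (Fin n)) :
    gradedSignAux d f * gradedSignAux d f = 1 := by
  rw [gradedSignAux, ← prod_mul_distrib]
  refine prod_eq_one fun x _ => ?_
  split_ifs
  · rw [← pow_add, Even.neg_one_pow ⟨_, rfl⟩]
  · rw [mul_one]

theorem gsign_eq_gradedSignAux_inv {ι : Type*} (p : ι → ℕ) {m : ℕ} (i : Fin m → ι)
    (σ : Perm (Fin m)) : gsign p i σ = gradedSignAux (fun k => p (i k)) σ⁻¹ := by
  rw [gsign, gradedSignAux, ← prod_filter]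
  refine prod_nbij' (fun x => ⟨σ x.1, σ x.2⟩) (fun y => (σ⁻¹ y.1, σ⁻¹ y.2)) ?_ ?_ ?_ ?_ ?_
  · rintro ⟨a, b⟩ h
    simp only [mem_filter, mem_univ, true_and, mem_finPairsLT] at h ⊢
    simpa using ⟨h.2, h.1.le⟩
  · rintro ⟨a, b⟩ h
    simp only [mem_filter, mem_univ, true_and, mem_finPairsLT] at h ⊢
    exact ⟨h.2.lt_of_ne (σ⁻¹.injective.ne h.1.ne'), by simpa using h.1⟩
  · intro x _; simp
  · intro y _; simp
  · intro x _; rfl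

theorem Equiv.Perm.sign_eq_signAux {n : ℕ} (f : Perm (Fin n)) : sign f = signAux f :=
  swap_induction_on f (by simp) fun f x y hxy ih => by
    rw [sign_mul, signAux_mul, sign_swap hxy, signAux_swap hxy, ih]

theorem gradedSignAux_const {n : ℕ} (c : ℕ) (f : Perm (Fin n)) :
    gradedSignAux (fun _ => c) f = if Odd c then ((sign f : ℤˣ) : ℤ) else 1 := by
  rw [sign_eq_signAux, gradedSignAux, signAux, Units.coe_prod]
  split_ifs with hc
  · refine prod_congr rfl fun x _ => ?_
    rw [(hc.mul hc).neg_one_pow]; split_ifs <;> rfl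
  · refine prod_eq_one fun x _ => ?_
    rw [(Nat.not_odd_iff_even.1 hc |>.mul_right c).neg_one_pow, ite_self]

theorem Equiv.Perm.exists_sigmaCongrRight_eq {α : Type*} {β : α → Type*} [∀ a, Finite (β a)]
    (ρ : Perm (Σ a, β a)) (hρ : ∀ x, (ρ x).1 = x.1) :
    ∃ g : ∀ a, Perm (β a), sigmaCongrRight g = ρ := by
  let f a (b : β a) : β a := cast (congrArg β (hρ ⟨a, b⟩)) (ρ ⟨a, b⟩).2
  have hf : ∀ a b, (⟨a, f a b⟩ : Σ a, β a) = ρ ⟨a, b⟩ := fun a b =>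
    Sigma.ext (hρ ⟨a, b⟩).symm (cast_heq _ _)
  have hinj : ∀ a, Function.Injective (f a) := fun a b c h => by
    simpa using ρ.injective ((hf a b).symm.trans ((congrArg (Sigma.mk a) h).trans (hf a c)))
  exact ⟨fun a => ofBijective (f a) (Finite.injective_iff_bijective.1 (hinj a)),
    Equiv.ext fun ⟨a, b⟩ => hf a b⟩

section BlockPerm

variable {ι : Type*} {r : ι → ℕ} {m : ℕ} (E : (Σ j, Fin (r j)) ≃ Fin m)

def blockPerm (g : ∀ j, Perm (Fin (r j))) : Perm (Fin m) :=
  E.permCongr (Perm.sigmaCongrRight g)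

theorem blockPerm_apply (g : ∀ j, Perm (Fin (r j))) (x : Σ j, Fin (r j)) :
    blockPerm E g (E x) = E ⟨x.1, g x.1 x.2⟩ := by
  simp [blockPerm, permCongr_apply]

theorem blockPerm_injective : Function.Injective (blockPerm E) :=
  E.permCongr.injective.comp sigmaCongrRightHom_injective

theorem exists_blockPerm_eq (ρ : Perm (Fin m)) (hρ : ∀ k, (E.symm (ρ k)).1 = (E.symm k).1) :
    ∃ g, blockPerm E g = ρ := by
  obtain ⟨g, hg⟩ := exists_sigmaCongrRight_eq (E.symm.permCongr ρ) fun x => by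
    simpa using hρ (E x)
  exact ⟨g, by rw [blockPerm, hg, ← permCongr_symm, apply_symm_apply]⟩

theorem sum_eq_sum_blockPerm [Fintype ι] [DecidableEq ι] {M : Type*} [AddCommMonoid M]
    (F : Perm (Fin m) → M)
    (hF : ∀ ρ, (∃ k, (E.symm (ρ k)).1 ≠ (E.symm k).1) → F ρ = 0) :
    ∑ ρ, F ρ = ∑ g, F (blockPerm E g) :=
  (Fintype.sum_of_injective _ (blockPerm_injective E) _ _ (fun ρ hρ => hF ρ <| by
    contrapose! hρ; exact exists_blockPerm_eq E ρ hρ) fun _ => rfl).symm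

theorem prod_blockPerm [Fintype ι] {M : Type*} [CommMonoid M]
    (K : (Σ j, Fin (r j)) → (Σ j, Fin (r j)) → M) (g : ∀ j, Perm (Fin (r j))) :
    ∏ k, K (E.symm (blockPerm E g k)) (E.symm k) = ∏ j, ∏ t, K ⟨j, g j t⟩ ⟨j, t⟩ := by
  rw [← E.prod_comp, ← univ_sigma_univ, prod_sigma]
  simp [blockPerm_apply]

end BlockPerm

section LexOrder

variable {ι : Type*} [Preorder ι] {r : ι → ℕ} {m : ℕ} {E : (Σ j, Fin (r j)) ≃ Fin m}

theorem mk_lt_mk_iff_of_lex (hE : ∀ a b, Sigma.Lex (· < ·) (fun _ => (· < ·)) a b ↔ E a < E b)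
    (j : ι) (s t : Fin (r j)) : E ⟨j, s⟩ < E ⟨j, t⟩ ↔ s < t := by
  rw [← hE, Sigma.lex_iff]
  simp

theorem mk_le_mk_iff_of_lex (hE : ∀ a b, Sigma.Lex (· < ·) (fun _ => (· < ·)) a b ↔ E a < E b)
    (j : ι) (s t : Fin (r j)) : E ⟨j, s⟩ ≤ E ⟨j, t⟩ ↔ s ≤ t := by
  rw [← not_lt, mk_lt_mk_iff_of_lex hE, not_lt]

theorem fst_lt_of_lex (hE : ∀ a b, Sigma.Lex (· < ·) (fun _ => (· < ·)) a b ↔ E a < E b)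
    {x y : Σ j, Fin (r j)} (hxy : E x < E y) (hne : x.1 ≠ y.1) : x.1 < y.1 := by
  rw [← hE, Sigma.lex_iff] at hxy
  exact hxy.resolve_right fun h => hne h.1

theorem gradedSignAux_blockPerm [Fintype ι]
    (hE : ∀ a b, Sigma.Lex (· < ·) (fun _ => (· < ·)) a b ↔ E a < E b)
    (p : ι → ℕ) (g : ∀ j, Perm (Fin (r j))) :
    gradedSignAux (fun k => p (E.symm k).1) (blockPerm E g) =
      ∏ j, gradedSignAux (fun _ => p j) (g j) := by
  simp only [gradedSignAux]
  rw [prod_sigma']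
  symm
  refine prod_of_injOn (fun x => ⟨E ⟨x.1, x.2.1⟩, E ⟨x.1, x.2.2⟩⟩) ?_ ?_ ?_ ?_
  · rintro ⟨j, s, t⟩ - ⟨j', s', t'⟩ - h
    simp only [Sigma.mk.injEq, EmbeddingLike.apply_eq_iff_eq] at h
    aesop
  · rintro ⟨j, s, t⟩ h
    simp only [coe_sigma, Set.mem_sigma_iff, mem_coe, mem_finPairsLT] at h ⊢
    exact (mk_lt_mk_iff_of_lex hE j t s).2 h.2
  -- a pair straddling two blocks is never inverted by a block permutation
  · rintro ⟨a, b⟩ hab hnot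
    obtain ⟨⟨j, s⟩, rfl⟩ := E.surjective a
    obtain ⟨⟨j', t⟩, rfl⟩ := E.surjective b
    replace hab : E ⟨j', t⟩ < E ⟨j, s⟩ := mem_finPairsLT.1 hab
    have hne : j' ≠ j := by
      rintro rfl
      refine hnot ⟨⟨j', s, t⟩, ?_, rfl⟩
      simpa [mem_finPairsLT] using (mk_lt_mk_iff_of_lex hE _ _ _).1 hab
    have hlt : blockPerm E g (E ⟨j', t⟩) < blockPerm E g (E ⟨j, s⟩) := by
      rw [blockPerm_apply, blockPerm_apply, ← hE]
      exact Sigma.Lex.left _ _ (fst_lt_of_lex hE hab hne)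
    exact if_neg hlt.not_ge
  · rintro ⟨j, s, t⟩ -
    simp [blockPerm_apply, mk_le_mk_iff_of_lex hE]

end LexOrder

theorem gsign_mul_mul_gsign {ι : Type*} (p : ι → ℕ) {m : ℕ} (i : Fin m → ι)
    {ρ : Perm (Fin m)} (hρ : ∀ k, i (ρ k) = i k) (τ : Perm (Fin m)) :
    gsign p i (ρ * τ) * gsign p i τ = gradedSignAux (fun k => p (i k)) ρ := by
  have hd : (fun k => p (i k)) ∘ (ρ⁻¹).symm = fun k => p (i k) := funext fun k =>
    congrArg p (hρ k)
  rw [gsign_eq_gradedSignAux_inv, gsign_eq_gradedSignAux_inv, mul_inv_rev, gradedSignAux_mul,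
    hd, inv_inv, mul_comm, ← mul_assoc, gradedSignAux_mul_self, one_mul]

theorem sum_gsign_mul_gsign_mul_prod {R : Type*} [CommRing R] {ι : Type*} (p : ι → ℕ) {m : ℕ}
    (i : Fin m → ι) (K : Fin m → Fin m → R) (hK : ∀ a b, i a ≠ i b → K a b = 0)
    (τ : Perm (Fin m)) :
    ∑ σ, (gsign p i σ : R) * gsign p i τ * ∏ k, K (σ k) (τ k) =
      ∑ ρ, (gradedSignAux (fun k => p (i k)) ρ : R) * ∏ k, K (ρ k) k := by
  rw [← Equiv.sum_comp (Equiv.mulRight τ)]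
  refine sum_congr rfl fun ρ _ => ?_
  simp only [coe_mulRight, mul_apply]
  rw [← Equiv.prod_comp τ (fun k => K (ρ k) k)]
  by_cases hρ : ∀ k, i (ρ k) = i k
  · rw [← gsign_mul_mul_gsign p i hρ τ, Int.cast_mul]
  · obtain ⟨k, hk⟩ := not_forall.1 hρ
    rw [prod_eq_zero (mem_univ (τ⁻¹ k)) (by simpa using hK _ _ hk), mul_zero, mul_zero]

theorem sum_gradedSignAux_mul_prod_eq_prod_sum {R : Type*} [CommRing R] {ι : Type*} [Preorder ι]
    [Fintype ι] [DecidableEq ι] {r : ι → ℕ} {m : ℕ} {E : (Σ j, Fin (r j)) ≃ Fin m}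
    (hE : ∀ a b, Sigma.Lex (· < ·) (fun _ => (· < ·)) a b ↔ E a < E b) (p : ι → ℕ)
    (K : (Σ j, Fin (r j)) → (Σ j, Fin (r j)) → R) (hK : ∀ x y, x.1 ≠ y.1 → K x y = 0) :
    ∑ ρ, (gradedSignAux (fun k => p (E.symm k).1) ρ : R) * ∏ k, K (E.symm (ρ k)) (E.symm k) =
      ∏ j, ∑ σ : Perm (Fin (r j)),
        (gradedSignAux (fun _ => p j) σ : R) * ∏ t, K ⟨j, σ t⟩ ⟨j, t⟩ := by
  rw [sum_eq_sum_blockPerm E _ fun ρ ⟨k, hk⟩ => by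
    rw [prod_eq_zero (mem_univ k) (hK _ _ hk), mul_zero], Fintype.prod_sum]
  refine sum_congr rfl fun g _ => ?_
  rw [gradedSignAux_blockPerm hE, prod_blockPerm, Int.cast_prod, ← prod_mul_distrib]

/-- `E` enumerates the blocks `v j t`, `t < r j`, in lexicographic order. Expanding norms by
`⟪h₁ ⊗ ⋯ ⊗ h_m, h'₁ ⊗ ⋯ ⊗ h'_m⟫ = ∏ ⟪h_k, h'_k⟫`, the identity
`‖P(v 0 0 ⊗ ⋯ ⊗ v (l-1) (r (l-1) - 1))‖² = (r₀!⋯r_{l-1}!/m!) ∏_j ‖v j 0 ⋄ ⋯ ⋄ v j (r j - 1)‖²`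
reads as follows, with `‖h₁ ⋄ ⋯ ⋄ h_r‖² = (1/r!) Σ_σ 𝔖(σ) ∏_t ⟪h_{σ t}, h_t⟫`, where `𝔖 = sign`
for odd `p j` and `𝔖 = 1` for even `p j`. -/
theorem stmt_16_general {H : Type*} [NormedAddCommGroup H] [InnerProductSpace ℝ H]
    (l : ℕ) (p : Fin l → ℕ) (r : Fin l → ℕ)
    (v : (j : Fin l) → Fin (r j) → H)
    (hcross : ∀ j j' s t, j ≠ j' → ⟪v j s, v j' t⟫ = 0)
    (E : (Σ j : Fin l, Fin (r j)) ≃ Fin (∑ j, r j))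
    (hE : ∀ a b : Σ j : Fin l, Fin (r j),
      Sigma.Lex (· < ·) (fun _ => (· < ·)) a b ↔ E a < E b) :
    (((∑ j, r j).factorial : ℝ)⁻¹) ^ 2 *
        ∑ σ : Equiv.Perm (Fin (∑ j, r j)), ∑ τ : Equiv.Perm (Fin (∑ j, r j)),
          (gsign p (fun t => (E.symm t).1) σ : ℝ) * (gsign p (fun t => (E.symm t).1) τ : ℝ) *
            ∏ k, ⟪v (E.symm (σ k)).1 (E.symm (σ k)).2, v (E.symm (τ k)).1 (E.symm (τ k)).2⟫
      = ((∏ j, (r j).factorial : ℕ) : ℝ) / (((∑ j, r j).factorial : ℕ) : ℝ) *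
        ∏ j, (((r j).factorial : ℝ)⁻¹ *
          ∑ σj : Equiv.Perm (Fin (r j)),
            (if Odd (p j) then ((Equiv.Perm.sign σj : ℤ) : ℝ) else 1) *
              ∏ t, ⟪v j (σj t), v j t⟫) := by
  have hsum : ∀ τ : Perm (Fin (∑ j, r j)),
      ∑ σ, (gsign p (fun t => (E.symm t).1) σ : ℝ) * (gsign p (fun t => (E.symm t).1) τ : ℝ) *
          ∏ k, ⟪v (E.symm (σ k)).1 (E.symm (σ k)).2, v (E.symm (τ k)).1 (E.symm (τ k)).2⟫ =
        ∏ j, ∑ σj : Perm (Fin (r j)),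
          (if Odd (p j) then ((sign σj : ℤ) : ℝ) else 1) * ∏ t, ⟪v j (σj t), v j t⟫ := fun τ => by
    rw [sum_gsign_mul_gsign_mul_prod p _
        (fun a b => ⟪v (E.symm a).1 (E.symm a).2, v (E.symm b).1 (E.symm b).2⟫)
        (fun a b h => hcross _ _ _ _ h),
      sum_gradedSignAux_mul_prod_eq_prod_sum hE p (fun x y => ⟪v x.1 x.2, v y.1 y.2⟫)
        (fun x y h => hcross _ _ _ _ h)]
    simp only [gradedSignAux_const, apply_ite (Int.cast : ℤ → ℝ), Int.cast_one]
  rw [sum_comm, sum_congr rfl fun τ _ => hsum τ, sum_const, card_univ, Fintype.card_perm,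
    Fintype.card_fin, nsmul_eq_mul, prod_mul_distrib, prod_inv_distrib]
  push_cast
  field_simp

/-- Norm of the graded symmetrization of a concatenated elementary tensor of (possibly
repeated) orthonormal basis vectors. The blocks are `v j t ∈ H_j`, `t < r j`, `j < l`:
unit vectors with pairwise inner products in `{0,1}`, vectors from different blocks
orthogonal, and within a block of odd degree pairwise orthogonal (strictly increasing
indices); `E` enumerates the blocks in (lexicographic) order into `Fin m`, `m = Σ r j`.
In terms of the product formula for inner products of elementary tensors, the claim
`‖P(e^{(1)}_{k₁^{(1)}}⊗…⊗e^{(l)}_{k_{r_l}^{(l)}})‖² = (r₁!⋯r_l!/m!) ∏_j ‖v j 1 ⋄ ⋯ ⋄ v j r_j‖²`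
reads as the following scalar identity, where the diamond-power norm is
`‖h₁⋄…⋄h_r‖² = (1/r!) Σ_{σ} 𝔖(σ,j) ∏_t ⟨h_{σ(t)}, h_t⟩`, with `𝔖(σ,j) = sign σ` for
`p j` odd and `𝔖(σ,j) = 1` for `p j` even. -/
theorem stmt_16 {H : Type*} [NormedAddCommGroup H] [InnerProductSpace ℝ H]
    (l : ℕ) (p : Fin l → ℕ) (r : Fin l → ℕ)
    (v : (j : Fin l) → Fin (r j) → H)
    (hunit : ∀ j t, ⟪v j t, v j t⟫ = 1)
    (h01 : ∀ j s t, ⟪v j s, v j t⟫ = 0 ∨ ⟪v j s, v j t⟫ = 1)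
    (hcross : ∀ j j' s t, j ≠ j' → ⟪v j s, v j' t⟫ = 0)
    (hodd : ∀ j, Odd (p j) → ∀ s t, s ≠ t → ⟪v j s, v j t⟫ = 0)
    (E : (Σ j : Fin l, Fin (r j)) ≃ Fin (∑ j, r j))
    (hE : ∀ a b : Σ j : Fin l, Fin (r j),
      Sigma.Lex (· < ·) (fun _ => (· < ·)) a b ↔ E a < E b) :
    (((∑ j, r j).factorial : ℝ)⁻¹) ^ 2 *
        ∑ σ : Equiv.Perm (Fin (∑ j, r j)), ∑ τ : Equiv.Perm (Fin (∑ j, r j)),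
          (gsign p (fun t => (E.symm t).1) σ : ℝ) * (gsign p (fun t => (E.symm t).1) τ : ℝ) *
            ∏ k, ⟪v (E.symm (σ k)).1 (E.symm (σ k)).2, v (E.symm (τ k)).1 (E.symm (τ k)).2⟫
      = ((∏ j, (r j).factorial : ℕ) : ℝ) / (((∑ j, r j).factorial : ℕ) : ℝ) *
        ∏ j, (((r j).factorial : ℝ)⁻¹ *
          ∑ σj : Equiv.Perm (Fin (r j)),
            (if Odd (p j) then ((Equiv.Perm.sign σj : ℤ) : ℝ) else 1) *
              ∏ t, ⟪v j (σj t), v j t⟫) :=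
  stmt_16_general l p r v hcross E hE
end
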